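/- Let (H,X) be a conjunctive query and G₁, G₂ graphs. If |Hom(F_ℓ(H,X), G₁)| = |Hom(F_ℓ(H,X), G₂)| for all positive integers ℓ, then |Ans((H,X), G₁)| = |Ans((H,X), G₂)|. -/

import Mathlib

/-- The canonical map `γ` from the vertices of the `ℓ`-copy `F_ℓ(H,X)` to the
vertices of `H`: each `x ∈ X` goes to itself, and each clone `(y,i)` goes to `y`. -/
def gammaMap {V : Type*} (X : Set V) (ℓ : ℕ) :
    (↥X ⊕ (↥(Xᶜ) × Fin ℓ)) → V
  | Sum.inl x => ↑x
  | Sum.inr (y, _) => ↑y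

/-- The copy index of a vertex of `F_ℓ(H,X)` (if any). -/
def copyIdx {V : Type*} (X : Set V) (ℓ : ℕ) :
    (↥X ⊕ (↥(Xᶜ) × Fin ℓ)) → Option (Fin ℓ)
  | Sum.inl _ => none
  | Sum.inr (_, i) => some i

/-- The `ℓ`-copy `F_ℓ(H,X)`: vertex set `X ∪ ((V(H)∖X) × [ℓ])`; two vertices are
adjacent iff their `γ`-images are adjacent in `H` and, when both lie in the cloned
part, their copy indices coincide.  (Edges within `X`, edges `{u,(v,i)}` for all
indices `i`, and edges `{(u,i),(v,i)}` within each copy.) -/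
def copyGraph {V : Type*} (H : SimpleGraph V) (X : Set V) (ℓ : ℕ) :
    SimpleGraph (↥X ⊕ (↥(Xᶜ) × Fin ℓ)) where
  Adj a b := H.Adj (gammaMap X ℓ a) (gammaMap X ℓ b) ∧
    ∀ i j, copyIdx X ℓ a = some i → copyIdx X ℓ b = some j → i = j
  symm := by
    constructor
    intro a b h
    exact ⟨h.1.symm, fun i j hi hj => (h.2 j i hj hi).symm⟩
  loopless := by
    constructor
    intro a h
    exact H.ne_of_adj h.1 rfl

/-- The set of answers of the conjunctive query `(H,X)` in a graph `G`: maps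
`a : X → V(G)` that extend to a graph homomorphism from `H` to `G`. -/
def Answers {V W : Type*} (H : SimpleGraph V) (X : Set V) (G : SimpleGraph W) :
    Set (↥X → W) :=
  {a | ∃ h : H →g G, ∀ x : ↥X, h ↑x = a x}

/-! Sorting the homomorphisms `F_ℓ(H,X) → G` by their restriction `a` to `X`, the `ℓ` copies of
`V(H) ∖ X` are mapped independently, each by an extension of `a` to a homomorphism `H → G`; hence
`|Hom(F_ℓ(H,X), G)| = ∑_a |Υ_a|^ℓ`. Power sums of all positive orders determine the number of
nonzero terms, which is the number of answers: evaluate `∑_a p(|Υ_a|)` for a polynomial `p` with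
`p(0) = 0` and `p = 1` at every nonzero value that occurs. -/

open Finset Polynomial

theorem sum_eval_eq_of_sum_pow_eq {K α β : Type*} [Semiring K] [Fintype α] [Fintype β]
    {F : α → K} {G : β → K} (h : ∀ ℓ, 0 < ℓ → ∑ a, F a ^ ℓ = ∑ b, G b ^ ℓ)
    (p : K[X]) (hp : p.eval 0 = 0) :
    ∑ a, p.eval (F a) = ∑ b, p.eval (G b) := by
  simp only [eval_eq_sum_range]
  rw [sum_comm, sum_comm (s := univ)]
  refine sum_congr rfl fun i _ => ?_
  rw [← mul_sum, ← mul_sum]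
  rcases Nat.eq_zero_or_pos i with rfl | hi
  · rw [coeff_zero_eq_eval_zero, hp, zero_mul, zero_mul]
  · rw [h i hi]

theorem exists_eval_zero_eq_zero_and_eval_eq_one {K : Type*} [Field K] (S : Finset K) :
    ∃ p : K[X], p.eval 0 = 0 ∧ ∀ x ∈ S, x ≠ 0 → p.eval x = 1 := by
  refine ⟨1 - ∏ s ∈ S, (1 - C s⁻¹ * X), by simp [eval_prod], fun x hx hx0 => ?_⟩
  rw [eval_sub, eval_one, eval_prod, prod_eq_zero hx (by simp [hx0]), sub_zero]

theorem natCast_card_ne_zero_eq_sum_eval {K γ : Type*} [Semiring K] [Fintype γ]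
    (E : γ → K) (p : K[X]) (hp0 : p.eval 0 = 0) (hp1 : ∀ c, E c ≠ 0 → p.eval (E c) = 1) :
    (Nat.card {c // E c ≠ 0} : K) = ∑ c, p.eval (E c) := by
  classical
  rw [Nat.card_eq_fintype_card, Fintype.card_subtype, ← sum_boole]
  refine sum_congr rfl fun c _ => ?_
  split_ifs with hc
  · exact (hp1 c hc).symm
  · rw [not_not.1 hc, hp0]

theorem card_ne_zero_eq_of_sum_pow_eq {K α β : Type*} [Field K] [CharZero K]
    [Fintype α] [Fintype β] {F : α → K} {G : β → K}
    (h : ∀ ℓ, 0 < ℓ → ∑ a, F a ^ ℓ = ∑ b, G b ^ ℓ) :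
    Nat.card {a // F a ≠ 0} = Nat.card {b // G b ≠ 0} := by
  classical
  obtain ⟨p, hp0, hp1⟩ := exists_eval_zero_eq_zero_and_eval_eq_one (univ.image F ∪ univ.image G)
  apply Nat.cast_injective (R := K)
  rw [natCast_card_ne_zero_eq_sum_eval F p hp0 fun a => hp1 _ (by simp),
    natCast_card_ne_zero_eq_sum_eval G p hp0 fun b => hp1 _ (by simp)]
  exact sum_eval_eq_of_sum_pow_eq h p hp0

section CopyGraph

variable {V W : Type*} (H : SimpleGraph V) (X : Set V) (G : SimpleGraph W)

def extensions (a : ↥X → W) : Set (H →g G) :=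
  {h | ∀ x : ↥X, h x = a x}

theorem mem_answers_iff_extensions_nonempty (a : ↥X → W) :
    a ∈ Answers H X G ↔ (extensions H X G a).Nonempty :=
  Iff.rfl

open Classical in
noncomputable def copyInclusion {ℓ : ℕ} (i : Fin ℓ) : H →g copyGraph H X ℓ where
  toFun v := if hv : v ∈ X then .inl ⟨v, hv⟩ else .inr (⟨v, hv⟩, i)
  map_rel' {u v} huv := by
    refine ⟨?_, fun j k hj hk => ?_⟩
    · split_ifs <;> exact huv
    · split_ifs at hj hk <;> simp_all [copyIdx]

theorem copyInclusion_of_notMem {ℓ : ℕ} (i : Fin ℓ) (y : ↥(Xᶜ)) :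
    copyInclusion H X i y = .inr (y, i) :=
  dif_neg y.2

theorem copyInclusion_of_mem {ℓ : ℕ} (i : Fin ℓ) (x : ↥X) :
    copyInclusion H X i x = .inl x :=
  dif_pos x.2

noncomputable def copyGraphHomEquiv {ℓ : ℕ} (hℓ : 0 < ℓ) :
    (copyGraph H X ℓ →g G) ≃ Σ a : ↥X → W, Fin ℓ → extensions H X G a where
  toFun φ := ⟨fun x => φ (.inl x), fun i =>
    ⟨φ.comp (copyInclusion H X i), fun x => by simp [copyInclusion_of_mem]⟩⟩
  invFun p :=
    { toFun
        | .inl x => p.1 x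
        | .inr (y, i) => (p.2 i).1 y
      map_rel' := by
        rintro (x | ⟨x, i⟩) (y | ⟨y, j⟩) ⟨hadj, hidx⟩ <;> dsimp only
        -- an edge inside `X` is witnessed by the extension on copy `0`
        · rw [← (p.2 ⟨0, hℓ⟩).2 x, ← (p.2 ⟨0, hℓ⟩).2 y]
          exact (p.2 _).1.map_adj hadj
        · rw [← (p.2 j).2 x]
          exact (p.2 j).1.map_adj hadj
        · rw [← (p.2 i).2 y]
          exact (p.2 i).1.map_adj hadj
        · obtain rfl := hidx i j rfl rfl
          exact (p.2 i).1.map_adj hadj }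
  left_inv φ := by
    ext (x | ⟨y, i⟩)
    · rfl
    · simp [copyInclusion_of_notMem]
  right_inv p := by
    obtain ⟨a, e⟩ := p
    refine Sigma.ext rfl (heq_of_eq (funext fun i => Subtype.ext (RelHom.ext fun v => ?_)))
    by_cases hv : v ∈ X
    · simpa [copyInclusion_of_mem H X i ⟨v, hv⟩] using ((e i).2 ⟨v, hv⟩).symm
    · simp [copyInclusion_of_notMem H X i ⟨v, hv⟩]

theorem card_copyGraph_hom [Finite V] [Fintype ↥X] [DecidableEq ↥X] [Fintype W]
    {ℓ : ℕ} (hℓ : 0 < ℓ) :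
    Nat.card (copyGraph H X ℓ →g G) = ∑ a : ↥X → W, Nat.card (extensions H X G a) ^ ℓ := by
  simp [Nat.card_congr (copyGraphHomEquiv H X G hℓ), Nat.card_sigma, Nat.card_fun]

theorem card_answers [Finite V] [Finite W] :
    Nat.card (Answers H X G) = Nat.card {a // Nat.card (extensions H X G a) ≠ 0} :=
  Nat.card_congr <| Equiv.subtypeEquivRight fun a => by
    rw [mem_answers_iff_extensions_nonempty, ← Set.nonempty_coe_sort, Nat.card_ne_zero,
      and_iff_left Subtype.finite]

end CopyGraph

/-- If `|Hom(F_ℓ(H,X), G₁)| = |Hom(F_ℓ(H,X), G₂)|` for all positive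
integers `ℓ`, then `|Ans((H,X), G₁)| = |Ans((H,X), G₂)|`. -/
theorem stmt7 {V W₁ W₂ : Type*} [Fintype V] [Finite W₁] [Finite W₂]
    (H : SimpleGraph V) (X : Set V)
    (G₁ : SimpleGraph W₁) (G₂ : SimpleGraph W₂)
    (hhom : ∀ ℓ : ℕ, 0 < ℓ →
      Nat.card (copyGraph H X ℓ →g G₁) = Nat.card (copyGraph H X ℓ →g G₂)) :
    Nat.card ↥(Answers H X G₁) = Nat.card ↥(Answers H X G₂) := by
  classical
  cases nonempty_fintype W₁
  cases nonempty_fintype W₂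
  have hpow : ∀ ℓ, 0 < ℓ →
      ∑ a, (Nat.card (extensions H X G₁ a) : ℚ) ^ ℓ =
        ∑ a, (Nat.card (extensions H X G₂ a) : ℚ) ^ ℓ := fun ℓ hℓ => by
    exact_mod_cast (card_copyGraph_hom H X G₁ hℓ).symm.trans
      ((hhom ℓ hℓ).trans (card_copyGraph_hom H X G₂ hℓ))
  rw [card_answers, card_answers]
  simpa only [ne_eq, Nat.cast_eq_zero] using card_ne_zero_eq_of_sum_pow_eq hpow
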